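/- arXiv:2603.01148 — 3 statements merged into one kernel-verified Lean document; each statement's English description precedes it below -/
import Mathlib

section
/- Let p > 3 be a prime and λ ∈ F_p with λ ∉ {0, 1, −1}. Then #{(u, v) ∈ F_p × F_p : v² = u⁴ + 2λu² + 1} + 1 = #{(x, y) ∈ F_p × F_p : y² = x³ − 4λx² + (4λ² − 4)x}. -/
/-!
The affine points of the quartic `v² = u⁴ + 2λu² + 1` correspond bijectively to the points of the
cubic `y² = x³ - 4λx² + (4λ² - 4)x` with `x ≠ 0`, via `x = 2(u² + v + λ)`, `y = 2ux`, with
inverse `u = y / 2x`, `v = x / 2 - λ - u²`. The only cubic point with `x = 0` is `(0, 0)`.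
-/

namespace JacobiQuartic

variable {K : Type*} [Field K]

def toCubic (l : K) (uv : K × K) : K × K :=
  (2 * (uv.1 ^ 2 + uv.2 + l), 2 * uv.1 * (2 * (uv.1 ^ 2 + uv.2 + l)))

def toQuartic (l : K) (xy : K × K) : K × K :=
  (xy.2 / (2 * xy.1), xy.1 / 2 - l - (xy.2 / (2 * xy.1)) ^ 2)

variable {l u v x y : K}

/-- On the quartic, `(v - u² - λ)(v + u² + λ) = 1 - λ²`. -/
lemma sq_add_add_ne_zero (hl : l ^ 2 ≠ 1) (h : v ^ 2 = u ^ 4 + 2 * l * u ^ 2 + 1) :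
    u ^ 2 + v + l ≠ 0 := by
  intro h0
  exact hl (by linear_combination h - (v - u ^ 2 - l) * h0)

lemma toCubic_mem (h : v ^ 2 = u ^ 4 + 2 * l * u ^ 2 + 1) :
    (toCubic l (u, v)).2 ^ 2 = (toCubic l (u, v)).1 ^ 3 - 4 * l * (toCubic l (u, v)).1 ^ 2
      + (4 * l ^ 2 - 4) * (toCubic l (u, v)).1 := by
  simp only [toCubic]
  linear_combination (-8 * (u ^ 2 + v + l)) * h

lemma toQuartic_mem (h2 : (2 : K) ≠ 0) (hx : x ≠ 0)
    (h : y ^ 2 = x ^ 3 - 4 * l * x ^ 2 + (4 * l ^ 2 - 4) * x) :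
    (toQuartic l (x, y)).2 ^ 2 = (toQuartic l (x, y)).1 ^ 4
      + 2 * l * (toQuartic l (x, y)).1 ^ 2 + 1 := by
  simp only [toQuartic]
  field_simp
  linear_combination (-4 * x ^ 3) * h

lemma toQuartic_toCubic (h2 : (2 : K) ≠ 0) (hX : u ^ 2 + v + l ≠ 0) :
    toQuartic l (toCubic l (u, v)) = (u, v) := by
  simp only [toQuartic, toCubic, Prod.mk.injEq]
  constructor
  · field_simp
  · field_simp
    ring

lemma toCubic_toQuartic (h2 : (2 : K) ≠ 0) (hx : x ≠ 0) :
    toCubic l (toQuartic l (x, y)) = (x, y) := by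
  simp only [toQuartic, toCubic, Prod.mk.injEq]
  constructor <;> field_simp <;> ring

open Finset

variable [Fintype K] [DecidableEq K]

lemma card_quartic_eq_card_cubic_fst_ne_zero (h2 : (2 : K) ≠ 0) (hl : l ^ 2 ≠ 1) :
    #{uv : K × K | uv.2 ^ 2 = uv.1 ^ 4 + 2 * l * uv.1 ^ 2 + 1} =
      #{xy : K × K | xy.2 ^ 2 = xy.1 ^ 3 - 4 * l * xy.1 ^ 2 + (4 * l ^ 2 - 4) * xy.1 ∧
        xy.1 ≠ 0} := by
  apply card_nbij' (toCubic l) (toQuartic l)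
  all_goals
    rintro ⟨a, b⟩ h
    simp only [mem_coe, mem_filter, mem_univ, true_and] at h ⊢
  · exact ⟨toCubic_mem h, mul_ne_zero h2 (sq_add_add_ne_zero hl h)⟩
  · exact toQuartic_mem h2 h.2 h.1
  · exact toQuartic_toCubic h2 (sq_add_add_ne_zero hl h)
  · exact toCubic_toQuartic h2 h.2

lemma card_cubic_eq_card_cubic_fst_ne_zero_add_one :
    #{xy : K × K | xy.2 ^ 2 = xy.1 ^ 3 - 4 * l * xy.1 ^ 2 + (4 * l ^ 2 - 4) * xy.1} =
      #{xy : K × K | xy.2 ^ 2 = xy.1 ^ 3 - 4 * l * xy.1 ^ 2 + (4 * l ^ 2 - 4) * xy.1 ∧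
        xy.1 ≠ 0} + 1 := by
  have h_fst_eq_zero : ({xy : K × K | xy.2 ^ 2 = xy.1 ^ 3 - 4 * l * xy.1 ^ 2
      + (4 * l ^ 2 - 4) * xy.1 ∧ xy.1 = 0} : Finset (K × K)) = {(0, 0)} := by
    ext ⟨x, y⟩
    simp only [mem_filter, mem_univ, true_and, mem_singleton, Prod.mk.injEq]
    constructor
    · rintro ⟨h, rfl⟩
      exact ⟨rfl, by simpa using h⟩
    · rintro ⟨rfl, rfl⟩
      simp
  rw [← filter_filter, ← card_filter_add_card_filter_not fun xy : K × K => xy.1 = 0,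
    filter_filter, h_fst_eq_zero, card_singleton, add_comm]

theorem card_quartic_add_one_eq_card_cubic (h2 : (2 : K) ≠ 0) (hl : l ^ 2 ≠ 1) :
    #{uv : K × K | uv.2 ^ 2 = uv.1 ^ 4 + 2 * l * uv.1 ^ 2 + 1} + 1 =
      #{xy : K × K | xy.2 ^ 2 = xy.1 ^ 3 - 4 * l * xy.1 ^ 2 + (4 * l ^ 2 - 4) * xy.1} := by
  rw [card_quartic_eq_card_cubic_fst_ne_zero h2 hl, card_cubic_eq_card_cubic_fst_ne_zero_add_one]

end JacobiQuartic

theorem jacobi_count_eq_Epp_count_general (p : ℕ) [Fact p.Prime] (hp : 3 < p)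
    (l : ZMod p) (hl1 : l ≠ 1) (hlm1 : l ≠ -1) :
    (Finset.univ.filter (fun uv : ZMod p × ZMod p =>
        uv.2 ^ 2 = uv.1 ^ 4 + 2 * l * uv.1 ^ 2 + 1)).card + 1 =
      (Finset.univ.filter (fun xy : ZMod p × ZMod p =>
        xy.2 ^ 2 = xy.1 ^ 3 - 4 * l * xy.1 ^ 2 + (4 * l ^ 2 - 4) * xy.1)).card :=
  JacobiQuartic.card_quartic_add_one_eq_card_cubic
    (Ring.two_ne_zero (by rw [ZMod.ringChar_zmod_n]; omega)) (sq_ne_one_iff.2 ⟨hl1, hlm1⟩)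

theorem jacobi_count_eq_Epp_count (p : ℕ) [Fact p.Prime] (hp : 3 < p)
    (l : ZMod p) (hl0 : l ≠ 0) (hl1 : l ≠ 1) (hlm1 : l ≠ -1) :
    (Finset.univ.filter (fun uv : ZMod p × ZMod p =>
        uv.2 ^ 2 = uv.1 ^ 4 + 2 * l * uv.1 ^ 2 + 1)).card + 1 =
      (Finset.univ.filter (fun xy : ZMod p × ZMod p =>
        xy.2 ^ 2 = xy.1 ^ 3 - 4 * l * xy.1 ^ 2 + (4 * l ^ 2 - 4) * xy.1)).card :=
  jacobi_count_eq_Epp_count_general p hp l hl1 hlm1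
end

section
/- Let p > 3 be a prime, θ a nontrivial additive character of F_p with values in ℂ, and λ ∈ F_p with λ ∉ {0, 1, −1}. Let N = #{(u, v) ∈ F_p × F_p : v² = u⁴ + 2λu² + 1}. Then (g(φ)·φ(−2λ)/(p−1)) · Σ_χ g(χ⁻¹)²·g(χ²·φ)·χ⁻¹(4λ²) = p·(N + 1 − p), where the sum runs over all multiplicative characters χ of F_p and both sides are complex numbers. -/
/-!
Expanding the three Gauss sums turns the character sum into a sum over triples `(x, y, z)`,
and orthogonality of characters keeps exactly those with `x y a² = z²`, where `a = 2λ`.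
Parametrising these by `y = x t²`, `z = a x t` and summing over `x` with the twisted Gauss sum
`∑ₓ φ(x) θ(c x) = φ(c) g(φ)` leaves `(p - 1) φ(a) g(φ) ∑ₜ φ(t) φ(t² + a t + 1)`.
Splitting `∑ᵤ φ(u⁴ + a u² + 1)` along the fibres of `u ↦ u²`, together with
`∑ₜ φ(t² + a t + 1) = -1` (a Jacobi sum, the discriminant being nonzero), identifies the last
sum with `N - p + 1`, and `g(φ)² = φ(-1) p` finishes the computation.
-/

open Finset

noncomputable section

variable {F : Type*} [Field F] [Fintype F]

section CharacterSum

variable {R : Type*} [CommRing R]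

lemma gaussSum_inv_sq_mul_gaussSum_sq_mul (χ η : MulChar F R) (ψ : AddChar F R) (a : F) :
    gaussSum χ⁻¹ ψ ^ 2 * gaussSum (χ ^ 2 * η) ψ * χ⁻¹ (a ^ 2) =
      ∑ x, ∑ z, ∑ y, ψ x * ψ z * η z * ψ y * χ (x⁻¹ * z ^ 2 * (a ^ 2)⁻¹ * y⁻¹) := by
  rw [sq, gaussSum, sum_mul_sum, gaussSum, sum_mul_sum, sum_mul]
  refine sum_congr rfl fun x _ => ?_
  rw [sum_mul]
  refine sum_congr rfl fun z _ => ?_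
  rw [sum_mul, sum_mul]
  refine sum_congr rfl fun y _ => ?_
  simp only [MulChar.inv_apply', MulChar.mul_apply, MulChar.pow_apply' χ two_ne_zero, map_mul,
    ← inv_pow, map_pow]
  ring

variable [DecidableEq F]

lemma sum_ite_mul_inv_eq_one (c : F) (f : F → R) :
    ∑ y, (if c * y⁻¹ = 1 then f y else 0) = if c = 0 then 0 else f c := by
  split_ifs with hc
  · simp [hc]
  · have hcond (y : F) : c * y⁻¹ = 1 ↔ c = y := by
      rcases eq_or_ne y 0 with rfl | hy
      · simp [hc]
      · exact mul_inv_eq_one₀ hy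
    simp only [hcond, sum_ite_eq, mem_univ, if_true]

lemma sum_ite_eq_sum_quadratic (η : MulChar F R) (ψ : AddChar F R) {a : F} (ha : a ≠ 0)
    (x : F) :
    ∑ z, (if x⁻¹ * z ^ 2 * (a ^ 2)⁻¹ = 0 then 0 else
        ψ x * ψ z * η z * ψ (x⁻¹ * z ^ 2 * (a ^ 2)⁻¹)) =
      η a * ∑ t, η x * η t * ψ ((t ^ 2 + a * t + 1) * x) := by
  rcases eq_or_ne x 0 with rfl | hx
  · simp [MulChar.map_zero]
  have hax : a * x ≠ 0 := mul_ne_zero ha hx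
  calc _ = ∑ z, ψ x * ψ z * η z * ψ (x⁻¹ * z ^ 2 * (a ^ 2)⁻¹) := by
          refine sum_congr rfl fun z _ => ite_eq_right_iff.mpr fun hz => ?_
          simp [hx, ha] at hz
          simp [hz, MulChar.map_zero]
    _ = ∑ t, ψ x * ψ (a * x * t) * η (a * x * t) * ψ (x⁻¹ * (a * x * t) ^ 2 * (a ^ 2)⁻¹) :=
          (Fintype.sum_bijective _ (mulLeft_bijective₀ _ hax) _ _ fun _ => rfl).symm
    _ = _ := by
          rw [mul_sum]
          refine sum_congr rfl fun t _ => ?_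
          rw [show (t ^ 2 + a * t + 1) * x = x + a * x * t + x⁻¹ * (a * x * t) ^ 2 * (a ^ 2)⁻¹ by
            field_simp; ring, AddChar.map_add_eq_mul, AddChar.map_add_eq_mul, map_mul η, map_mul η]
          ring

end CharacterSum

variable [DecidableEq F]

lemma MulChar.sum_apply_eq_ite [Fintype (MulChar F ℂ)] (a : F) :
    ∑ χ : MulChar F ℂ, χ a = if a = 1 then (Fintype.card F : ℂ) - 1 else 0 := by
  split_ifs with ha
  · have hcard := card_eq_card_units_of_hasEnoughRootsOfUnity F ℂ
    rw [Nat.card_eq_fintype_card, Nat.card_eq_fintype_card, Fintype.card_units] at hcard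
    simp [ha, hcard, Nat.cast_sub Fintype.card_pos]
  · obtain ⟨χ, hχ⟩ := exists_apply_ne_one_of_hasEnoughRootsOfUnity F ℂ ha
    refine eq_zero_of_mul_eq_self_left hχ ?_
    simp only [mul_sum, ← MulChar.mul_apply]
    exact Fintype.sum_bijective _ (Group.mulLeft_bijective χ) _ _ fun _ ↦ rfl

variable (F) in
def quadCharℂ : MulChar F ℂ := (quadraticChar F).ringHomComp (Int.castRingHom ℂ)

lemma quadCharℂ_apply (a : F) : quadCharℂ F a = quadraticChar F a := rfl

lemma quadCharℂ_isQuadratic : (quadCharℂ F).IsQuadratic :=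
  (quadraticChar_isQuadratic F).comp _

lemma quadCharℂ_ne_one (hF : ringChar F ≠ 2) : quadCharℂ F ≠ 1 :=
  (MulChar.ringHomComp_ne_one_iff (RingHom.injective_int _)).mpr (quadraticChar_ne_one hF)

lemma quadCharℂ_mul_self {a : F} (ha : a ≠ 0) : quadCharℂ F a * quadCharℂ F a = 1 := by
  rw [← sq, quadCharℂ_apply, ← Int.cast_pow, quadraticChar_sq_one ha, Int.cast_one]

lemma card_filter_sq_eq (hF : ringChar F ≠ 2) (a : F) :
    (#{v : F | v ^ 2 = a} : ℂ) = quadCharℂ F a + 1 := by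
  have h := quadraticChar_card_sqrts hF a
  rw [quadCharℂ_apply]
  exact_mod_cast (by simpa using h : (#{v : F | v ^ 2 = a} : ℤ) = quadraticChar F a + 1)

lemma card_filter_sq_eq_apply (hF : ringChar F ≠ 2) (f : F → F) :
    (#{uv : F × F | uv.2 ^ 2 = f uv.1} : ℂ) = Fintype.card F + ∑ u, quadCharℂ F (f u) := by
  rw [card_filter, Fintype.sum_prod_type]
  simp only [← card_filter, Nat.cast_sum, card_filter_sq_eq hF, sum_add_distrib, sum_const,
    card_univ, nsmul_eq_mul, mul_one, add_comm]

lemma sum_comp_sq (hF : ringChar F ≠ 2) (f : F → ℂ) :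
    ∑ u, f (u ^ 2) = ∑ t, (quadCharℂ F t + 1) * f t := by
  rw [← sum_fiberwise univ (· ^ 2)]
  refine sum_congr rfl fun t _ => ?_
  rw [sum_congr rfl fun u hu => by rw [(mem_filter.mp hu).2], sum_const, nsmul_eq_mul,
    card_filter_sq_eq hF]

lemma sum_quadCharℂ_mul_addChar_mul (hF : ringChar F ≠ 2) (ψ : AddChar F ℂ) (c : F) :
    ∑ x, quadCharℂ F x * ψ (c * x) = quadCharℂ F c * gaussSum (quadCharℂ F) ψ := by
  rcases eq_or_ne c 0 with rfl | hc
  · simp only [zero_mul, AddChar.map_zero_eq_one, mul_one, MulChar.map_zero]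
    exact MulChar.sum_eq_zero_of_ne_one (quadCharℂ_ne_one hF)
  · rw [← gaussSum_mulShift (quadCharℂ F) ψ (Units.mk0 c hc), ← mul_assoc, Units.val_mk0,
      quadCharℂ_mul_self hc, one_mul]
    simp only [gaussSum, AddChar.mulShift_apply]

lemma jacobiSum_quadCharℂ (hF : ringChar F ≠ 2) :
    jacobiSum (quadCharℂ F) (quadCharℂ F) = -quadCharℂ F (-1) := by
  simpa [quadCharℂ_isQuadratic.inv] using jacobiSum_nontrivial_inv (quadCharℂ_ne_one hF)

lemma sum_quadCharℂ_mul_add (hF : ringChar F ≠ 2) {d : F} (hd : d ≠ 0) :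
    ∑ t, quadCharℂ F t * quadCharℂ F (t + d) = -1 := by
  calc ∑ t, quadCharℂ F t * quadCharℂ F (t + d)
      = ∑ x, quadCharℂ F (-d * x) * quadCharℂ F (-d * x + d) :=
        (Fintype.sum_bijective _ (mulLeft_bijective₀ _ (neg_ne_zero.mpr hd)) _ _
          fun _ => rfl).symm
    _ = quadCharℂ F (-1) * (quadCharℂ F d * quadCharℂ F d) *
          jacobiSum (quadCharℂ F) (quadCharℂ F) := by
        rw [jacobiSum, mul_sum]
        refine sum_congr rfl fun x _ => ?_
        rw [show -d * x + d = d * (1 - x) by ring, neg_mul, ← neg_one_mul, map_mul, map_mul,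
          map_mul]
        ring
    _ = -1 := by
        rw [quadCharℂ_mul_self hd, jacobiSum_quadCharℂ hF, mul_one, mul_neg,
          quadCharℂ_mul_self (neg_ne_zero.mpr one_ne_zero)]

lemma sum_quadCharℂ_add (hF : ringChar F ≠ 2) (d : F) : ∑ t, quadCharℂ F (t + d) = 0 := by
  rw [← MulChar.sum_eq_zero_of_ne_one (quadCharℂ_ne_one hF)]
  exact Equiv.sum_comp (Equiv.addRight d) (quadCharℂ F)

lemma sum_quadCharℂ_sq_add (hF : ringChar F ≠ 2) {d : F} (hd : d ≠ 0) :
    ∑ s, quadCharℂ F (s ^ 2 + d) = -1 := by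
  rw [sum_comp_sq hF (fun t => quadCharℂ F (t + d))]
  simp only [add_mul, one_mul, sum_add_distrib, sum_quadCharℂ_mul_add hF hd,
    sum_quadCharℂ_add hF, add_zero]

lemma sum_quadCharℂ_quadratic (hF : ringChar F ≠ 2) {b c : F} (h : b ^ 2 ≠ 4 * c) :
    ∑ t, quadCharℂ F (t ^ 2 + b * t + c) = -1 := by
  have h2 : (2 : F) ≠ 0 := Ring.two_ne_zero hF
  rw [← sum_quadCharℂ_sq_add hF (d := c - (b / 2) ^ 2) ?_]
  · refine Fintype.sum_equiv (Equiv.addRight (b / 2)) _ _ fun t => ?_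
    simp only [Equiv.coe_addRight]
    congr 1
    field_simp
    ring
  · contrapose! h
    field_simp at h
    linear_combination -h

lemma sum_quadCharℂ_mul_quadratic (hF : ringChar F ≠ 2) {b c : F} (h : b ^ 2 ≠ 4 * c) :
    ∑ t, quadCharℂ F t * quadCharℂ F (t ^ 2 + b * t + c) =
      ∑ u, quadCharℂ F (u ^ 4 + b * u ^ 2 + c) + 1 := by
  have hquartic : ∑ u, quadCharℂ F (u ^ 4 + b * u ^ 2 + c) =
      ∑ u, quadCharℂ F ((u ^ 2) ^ 2 + b * u ^ 2 + c) := by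
    simp only [← pow_mul]
  rw [hquartic, sum_comp_sq hF (fun t => quadCharℂ F (t ^ 2 + b * t + c))]
  simp only [add_mul, one_mul, sum_add_distrib, sum_quadCharℂ_quadratic hF h]
  ring

lemma sum_mulChar_gaussSum_eq [Fintype (MulChar F ℂ)] (hF : ringChar F ≠ 2)
    (ψ : AddChar F ℂ) {a : F} (ha : a ≠ 0) :
    ∑ χ : MulChar F ℂ, gaussSum χ⁻¹ ψ ^ 2 * gaussSum (χ ^ 2 * quadCharℂ F) ψ * χ⁻¹ (a ^ 2) =
      ((Fintype.card F : ℂ) - 1) * quadCharℂ F a * gaussSum (quadCharℂ F) ψ *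
        ∑ t, quadCharℂ F t * quadCharℂ F (t ^ 2 + a * t + 1) := by
  have hinner (t : F) : ∑ x, quadCharℂ F x * quadCharℂ F t * ψ ((t ^ 2 + a * t + 1) * x) =
      quadCharℂ F t * quadCharℂ F (t ^ 2 + a * t + 1) * gaussSum (quadCharℂ F) ψ := by
    simp only [mul_right_comm _ (quadCharℂ F t), ← sum_mul, sum_quadCharℂ_mul_addChar_mul hF]
    ring
  calc _ = ∑ x, ∑ z, ∑ y, ψ x * ψ z * quadCharℂ F z * ψ y *
          ∑ χ : MulChar F ℂ, χ (x⁻¹ * z ^ 2 * (a ^ 2)⁻¹ * y⁻¹) := by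
        simp only [gaussSum_inv_sq_mul_gaussSum_sq_mul, mul_sum]
        rw [sum_comm]
        refine sum_congr rfl fun x _ => ?_
        rw [sum_comm]
        exact sum_congr rfl fun z _ => sum_comm
    _ = ((Fintype.card F : ℂ) - 1) * ∑ x, quadCharℂ F a *
          ∑ t, quadCharℂ F x * quadCharℂ F t * ψ ((t ^ 2 + a * t + 1) * x) := by
        simp only [MulChar.sum_apply_eq_ite, mul_ite, mul_zero, sum_ite_mul_inv_eq_one]
        rw [mul_sum]
        refine sum_congr rfl fun x _ => ?_
        rw [← sum_ite_eq_sum_quadratic _ ψ ha x, mul_sum]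
        refine sum_congr rfl fun z _ => ?_
        split_ifs <;> ring
    _ = _ := by
        rw [← mul_sum, sum_comm]
        simp only [hinner, ← sum_mul]
        ring

end

theorem gauss_sum_A2 (p : ℕ) [Fact p.Prime] (hp : 3 < p)
    (θ : AddChar (ZMod p) ℂ) (hθ : θ ≠ 1)
    (l : ZMod p) (hl0 : l ≠ 0) (hl1 : l ≠ 1) (hlm1 : l ≠ -1)
    (N : ℕ)
    (hN : N = (Finset.univ.filter (fun uv : ZMod p × ZMod p =>
      uv.2 ^ 2 = uv.1 ^ 4 + 2 * l * uv.1 ^ 2 + 1)).card) :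
    letI φ : MulChar (ZMod p) ℂ := (quadraticChar (ZMod p)).ringHomComp (Int.castRingHom ℂ)
    (gaussSum φ θ * φ (-2 * l) / ((p : ℂ) - 1)) *
        ∑ᶠ χ : MulChar (ZMod p) ℂ,
          gaussSum χ⁻¹ θ ^ 2 * gaussSum (χ ^ 2 * φ) θ * χ⁻¹ (4 * l ^ 2) =
      (p : ℂ) * ((N : ℂ) + 1 - (p : ℂ)) := by
  have hF : ringChar (ZMod p) ≠ 2 := by
    rw [ZMod.ringChar_zmod_n]
    omega
  have h2 : (2 : ZMod p) ≠ 0 := Ring.two_ne_zero hF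
  have hdisc : (2 * l) ^ 2 ≠ 4 * 1 := by
    intro h
    have hsq : l ^ 2 = 1 := mul_left_cancel₀ (mul_ne_zero h2 h2) (by linear_combination h)
    exact (sq_eq_one_iff.mp hsq).elim hl1 hlm1
  have hp1 : (p : ℂ) - 1 ≠ 0 := sub_ne_zero.mpr (by exact_mod_cast (Fact.out : p.Prime).one_lt.ne')
  have hgauss := gaussSum_sq (quadCharℂ_ne_one hF) quadCharℂ_isQuadratic
    (AddChar.IsPrimitive.of_ne_one hθ)
  have hcount : (N : ℂ) = p + ∑ u, quadCharℂ _ (u ^ 4 + 2 * l * u ^ 2 + 1) := by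
    rw [hN, card_filter_sq_eq_apply hF (fun u => u ^ 4 + 2 * l * u ^ 2 + 1), ZMod.card]
  change gaussSum (quadCharℂ _) θ * quadCharℂ _ (-2 * l) / ((p : ℂ) - 1) *
      ∑ᶠ χ : MulChar (ZMod p) ℂ,
        gaussSum χ⁻¹ θ ^ 2 * gaussSum (χ ^ 2 * quadCharℂ _) θ * χ⁻¹ (4 * l ^ 2) = _
  rw [finsum_eq_sum_of_fintype, show 4 * l ^ 2 = (2 * l) ^ 2 by ring,
    sum_mulChar_gaussSum_eq hF θ (mul_ne_zero h2 hl0), sum_quadCharℂ_mul_quadratic hF hdisc,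
    hcount, ZMod.card, show -2 * l = -1 * (2 * l) by ring, map_mul, div_mul_eq_mul_div,
    div_eq_iff hp1]
  rw [ZMod.card] at hgauss
  set φ := quadCharℂ (ZMod p)
  linear_combination ((p : ℂ) - 1) * (∑ u, φ (u ^ 4 + 2 * l * u ^ 2 + 1) + 1) *
    (φ (-1) * φ (2 * l) ^ 2 * hgauss +
      p * φ (2 * l) ^ 2 * quadCharℂ_mul_self (neg_ne_zero.mpr (one_ne_zero' (ZMod p))) +
      p * quadCharℂ_mul_self (mul_ne_zero h2 hl0))
end

section
/- Let p > 3 be a prime, θ a nontrivial additive character of F_p with values in ℂ, and λ ∈ F_p with λ ≠ 0. Then, as complex numbers, p · #{(x, y) ∈ F_p × F_p : y² = x³ + 3λ(x + 1)²} = p² + p·φ(3λ) + (φ(−3λ)·g(φ)/(p−1)²) · Σ_{A,B} g(A⁻¹)·g(B⁻¹)·g(A³B²)·g(A⁻²B⁻¹φ)·(A³B²)⁻¹(2)·A⁻¹(3λ), where the sum runs over all pairs (A, B) of multiplicative characters of F_p. -/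
/-!
Writing `c = 3λ` and `f m = m³ + c(m + 1)²`, counting square roots with `φ` turns the left-hand
side into `p² + p ∑ₓ φ(f x)`. On the right, expand `g(A³B²)` and `g(A⁻²B⁻¹φ)` as sums over
`v` and `w`, and substitute `v = 2wm`. The sums over `A` and `B` then become the Fourier inversion
`∑_χ g(χ⁻¹) χ(a) = (p - 1) θ(a)` (for `a ≠ 0`) at `a = wm³/c` and `a = wm²`, and the phases
combine to `θ(w f(m)/c)`. Summing over `w` leaves `(p - 1)² g(φ) ∑_{m ≠ 0} φ(f m / c)`, and
`g(φ)² = φ(-1) p` finishes the computation.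
-/

open Finset

namespace MulChar

theorem sum_apply_eq_ite_s16 {M R : Type*} [CommMonoid M] [Finite M] [DecidableEq M] [CommRing R]
    [IsDomain R] [HasEnoughRootsOfUnity R (Monoid.exponent Mˣ)] [Fintype (MulChar M R)] (a : M) :
    ∑ χ : MulChar M R, χ a = if a = 1 then (Nat.card Mˣ : R) else 0 := by
  split_ifs with ha
  · simp [ha, ← Nat.card_eq_fintype_card, card_eq_card_units_of_hasEnoughRootsOfUnity]
  · obtain ⟨χ, hχ⟩ := exists_apply_ne_one_of_hasEnoughRootsOfUnity M R ha
    refine eq_zero_of_mul_eq_self_left hχ ?_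
    simp only [mul_sum, ← mul_apply]
    exact Fintype.sum_bijective _ (Group.mulLeft_bijective χ) _ _ fun _ ↦ rfl

variable {F R : Type*} [Field F] [Fintype F] [CommRing R] [IsDomain R]

theorem sum_gaussSum_inv_mul_apply [DecidableEq F] [HasEnoughRootsOfUnity R (Monoid.exponent Fˣ)]
    [Fintype (MulChar F R)] (ψ : AddChar F R) (a : F) :
    ∑ χ : MulChar F R, gaussSum χ⁻¹ ψ * χ a = if a = 0 then 0 else (Nat.card Fˣ : R) * ψ a := by
  have inv_mul_eq_one_iff (x : F) : x⁻¹ * a = 1 ↔ a ≠ 0 ∧ x = a := by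
    rcases eq_or_ne x 0 with rfl | hx
    · simp [eq_comm]
    · rw [inv_mul_eq_one₀ hx]
      exact ⟨fun h ↦ ⟨h ▸ hx, h⟩, And.right⟩
  calc ∑ χ : MulChar F R, gaussSum χ⁻¹ ψ * χ a
      = ∑ x, ψ x * ∑ χ : MulChar F R, χ (x⁻¹ * a) := by
        simp only [gaussSum, sum_mul, mul_sum, inv_apply', map_mul]
        rw [sum_comm]
        exact sum_congr rfl fun _ _ ↦ sum_congr rfl fun _ _ ↦ by ring
    _ = ∑ x, ψ x * if a ≠ 0 ∧ x = a then (Nat.card Fˣ : R) else 0 := by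
        simp only [sum_apply_eq_ite_s16, inv_mul_eq_one_iff]
    _ = _ := by split_ifs with ha <;> simp [ha, mul_comm]

theorem IsQuadratic.gaussSum_mulShift {χ : MulChar F R} (hχ : χ.IsQuadratic) (hχ₁ : χ ≠ 1)
    (ψ : AddChar F R) (c : F) : gaussSum χ (ψ.mulShift c) = χ c * gaussSum χ ψ := by
  rcases eq_or_ne c 0 with rfl | hc
  · rw [AddChar.mulShift_zero, gaussSum_one_right hχ₁, MulChar.map_zero, zero_mul]
  · simpa [hχ.inv] using gaussSum_mulShift_eq χ ψ (Units.mk0 c hc)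

end MulChar

variable {F R : Type*} [Field F] [Fintype F] [CommRing R]

theorem card_filter_sq_eq_card_add_sum_quadraticChar [DecidableEq F] (hF : ringChar F ≠ 2)
    (f : F → F) :
    (#{xy : F × F | xy.2 ^ 2 = f xy.1} : ℤ) = Fintype.card F + ∑ x, quadraticChar F (f x) := by
  have hfiber : #{xy : F × F | xy.2 ^ 2 = f xy.1} = ∑ x, #{y : F | y ^ 2 = f x} := by
    simp only [card_filter, Fintype.sum_prod_type]
  have hsqrts (x : F) : (#{y : F | y ^ 2 = f x} : ℤ) = quadraticChar F (f x) + 1 := by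
    simpa only [Set.toFinset_ofPred] using quadraticChar_card_sqrts hF (f x)
  push_cast [hfiber, hsqrts, sum_add_distrib]
  simp [add_comm]

theorem gaussSum_mul_gaussSum_mul_apply_eq_sum [Nontrivial R] (h2 : (2 : F) ≠ 0)
    (ψ : AddChar F R) (A B φ : MulChar F R) (c : F) :
    gaussSum (A ^ 3 * B ^ 2) ψ * gaussSum (A⁻¹ ^ 2 * B⁻¹ * φ) ψ * (A ^ 3 * B ^ 2)⁻¹ 2 * A⁻¹ c =
      ∑ w, ∑ m, φ w * ψ (w * (2 * m + 1)) * A (w * m ^ 3 / c) * B (w * m ^ 2) := by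
  rw [gaussSum, gaussSum, sum_mul_sum, sum_comm]
  simp only [sum_mul]
  refine sum_congr rfl fun w _ ↦ ?_
  rcases eq_or_ne w 0 with rfl | hw
  · simp [MulChar.map_zero]
  symm
  refine Fintype.sum_bijective (2 * w * ·) (mulLeft_bijective₀ _ (by simp [h2, hw])) _ _ fun m ↦ ?_
  have hA : w * m ^ 3 / c = (2 * w * m) ^ 3 * w⁻¹ ^ 2 * 2⁻¹ ^ 3 * c⁻¹ := by field_simp
  have hB : w * m ^ 2 = (2 * w * m) ^ 2 * w⁻¹ * 2⁻¹ ^ 2 := by field_simp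
  have hψ : w * (2 * m + 1) = 2 * w * m + w := by ring
  simp only [hA, hB, hψ, AddChar.map_add_eq_mul, MulChar.mul_apply, MulChar.inv_apply',
    MulChar.pow_apply' _ three_ne_zero, MulChar.pow_apply' _ two_ne_zero, map_mul, map_pow]
  ring

theorem sum_sum_gaussSum_prod_eq [IsDomain R] [DecidableEq F]
    [HasEnoughRootsOfUnity R (Monoid.exponent Fˣ)] [Fintype (MulChar F R)] (h2 : (2 : F) ≠ 0)
    {c : F} (hc : c ≠ 0) (ψ : AddChar F R) {φ : MulChar F R} (hφ : φ.IsQuadratic) (hφ₁ : φ ≠ 1) :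
    ∑ A : MulChar F R, ∑ B : MulChar F R, gaussSum A⁻¹ ψ * gaussSum B⁻¹ ψ *
        gaussSum (A ^ 3 * B ^ 2) ψ * gaussSum (A⁻¹ ^ 2 * B⁻¹ * φ) ψ * (A ^ 3 * B ^ 2)⁻¹ 2 * A⁻¹ c =
      (Nat.card Fˣ : R) ^ 2 * gaussSum φ ψ * (φ c * ∑ x, φ (x ^ 3 + c * (x + 1) ^ 2) - 1) := by
  set N : R := (Nat.card Fˣ : R)
  set f : F → F := fun x ↦ x ^ 3 + c * (x + 1) ^ 2
  have collapse (w m : F) :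
      φ w * ψ (w * (2 * m + 1)) * (if w * m ^ 3 / c = 0 then 0 else N * ψ (w * m ^ 3 / c)) *
        (if w * m ^ 2 = 0 then 0 else N * ψ (w * m ^ 2)) =
      if m = 0 then 0 else N ^ 2 * (φ w * ψ (f m / c * w)) := by
    rcases eq_or_ne m 0 with rfl | hm
    · simp
    rcases eq_or_ne w 0 with rfl | hw
    · simp [MulChar.map_zero]
    have harg : f m / c * w = w * (2 * m + 1) + w * m ^ 3 / c + w * m ^ 2 := by
      simp only [f]; field_simp; ring
    simp only [hm, hw, hc, harg, AddChar.map_add_eq_mul, if_false, mul_eq_zero, div_eq_zero_iff,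
      pow_eq_zero_iff, ne_eq, OfNat.ofNat_ne_zero, not_false_eq_true, or_self]
    ring
  calc _ = ∑ wm : F × F, ∑ A : MulChar F R, ∑ B : MulChar F R,
        φ wm.1 * ψ (wm.1 * (2 * wm.2 + 1)) * (gaussSum A⁻¹ ψ * A (wm.1 * wm.2 ^ 3 / c)) *
          (gaussSum B⁻¹ ψ * B (wm.1 * wm.2 ^ 2)) := by
        refine .trans ?_ ((sum_congr rfl fun A _ ↦ sum_comm).trans sum_comm)
        refine sum_congr rfl fun A _ ↦ sum_congr rfl fun B _ ↦ ?_
        simp only [mul_assoc (gaussSum A⁻¹ ψ * gaussSum B⁻¹ ψ)]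
        rw [gaussSum_mul_gaussSum_mul_apply_eq_sum h2, Fintype.sum_prod_type]
        simp only [mul_sum]
        exact sum_congr rfl fun w _ ↦ sum_congr rfl fun m _ ↦ by ring
    _ = ∑ w, ∑ m, if m = 0 then 0 else N ^ 2 * (φ w * ψ (f m / c * w)) := by
        simp only [← mul_sum, ← sum_mul, MulChar.sum_gaussSum_inv_mul_apply, Fintype.sum_prod_type]
        exact sum_congr rfl fun w _ ↦ sum_congr rfl fun m _ ↦ collapse w m
    _ = N ^ 2 * ∑ m, if m = 0 then 0 else gaussSum φ ψ * φ (f m / c) := by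
        rw [sum_comm, mul_sum]
        refine sum_congr rfl fun m _ ↦ ?_
        split_ifs
        · simp
        · rw [mul_comm (gaussSum φ ψ), ← hφ.gaussSum_mulShift hφ₁, ← mul_sum]
          simp only [gaussSum, AddChar.mulShift_apply]
    _ = _ := by
        have hf0 : f 0 / c = 1 := by simp [f, hc]
        have hdiv (m : F) : φ (f m / c) = φ c * φ (f m) := by
          rw [div_eq_mul_inv, map_mul, ← MulChar.inv_apply', hφ.inv, mul_comm]
        rw [sum_ite, sum_const_zero, zero_add, filter_ne', sum_erase_eq_sub (mem_univ _)]
        simp only [hf0, hdiv, ← mul_sum, MulChar.map_one]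
        ring

theorem dik_point_count_gauss_sum (p : ℕ) [Fact p.Prime] (hp : 3 < p)
    (θ : AddChar (ZMod p) ℂ) (hθ : θ ≠ 1)
    (l : ZMod p) (hl : l ≠ 0) :
    letI φ : MulChar (ZMod p) ℂ := (quadraticChar (ZMod p)).ringHomComp (Int.castRingHom ℂ)
    (p : ℂ) * ((Finset.univ.filter (fun xy : ZMod p × ZMod p =>
          xy.2 ^ 2 = xy.1 ^ 3 + 3 * l * (xy.1 + 1) ^ 2)).card : ℂ) =
      (p : ℂ) ^ 2 + (p : ℂ) * φ (3 * l) +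
        (φ (-3 * l) * gaussSum φ θ / ((p : ℂ) - 1) ^ 2) *
          ∑ᶠ A : MulChar (ZMod p) ℂ, ∑ᶠ B : MulChar (ZMod p) ℂ,
            gaussSum A⁻¹ θ * gaussSum B⁻¹ θ * gaussSum (A ^ 3 * B ^ 2) θ *
              gaussSum (A⁻¹ ^ 2 * B⁻¹ * φ) θ * (A ^ 3 * B ^ 2)⁻¹ 2 * A⁻¹ (3 * l) := by
  set φ : MulChar (ZMod p) ℂ := (quadraticChar (ZMod p)).ringHomComp (Int.castRingHom ℂ)
  have hF : ringChar (ZMod p) ≠ 2 := by rw [ZMod.ringChar_zmod_n]; omega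
  have h3 : ((3 : ℕ) : ZMod p) ≠ 0 := by
    rw [Ne, ZMod.natCast_eq_zero_iff]; exact Nat.not_dvd_of_pos_of_lt three_pos hp
  have h3l : 3 * l ≠ 0 := mul_ne_zero (by exact_mod_cast h3) hl
  have hφ : φ.IsQuadratic := (quadraticChar_isQuadratic _).comp _
  have hφ₁ : φ ≠ 1 :=
    (MulChar.ringHomComp_ne_one_iff (RingHom.injective_int _)).mpr (quadraticChar_ne_one hF)
  have hφ_sq {a : ZMod p} (ha : a ≠ 0) : φ a ^ 2 = 1 := by
    simpa [φ] using congr_arg (Int.cast : ℤ → ℂ) (quadraticChar_sq_one ha)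
  have hcount : (#{xy : ZMod p × ZMod p | xy.2 ^ 2 = xy.1 ^ 3 + 3 * l * (xy.1 + 1) ^ 2} : ℂ) =
      p + ∑ x, φ (x ^ 3 + 3 * l * (x + 1) ^ 2) := by
    have := card_filter_sq_eq_card_add_sum_quadraticChar hF fun x ↦ x ^ 3 + 3 * l * (x + 1) ^ 2
    rw [ZMod.card] at this
    simpa [φ] using congr_arg (Int.cast : ℤ → ℂ) this
  have hunits : (Nat.card (ZMod p)ˣ : ℂ) = p - 1 := by
    rw [Nat.card_eq_fintype_card, ZMod.card_units p, Nat.cast_sub (by omega), Nat.cast_one]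
  have hg : gaussSum φ θ ^ 2 = φ (-1) * p := by
    rw [gaussSum_sq hφ₁ hφ (AddChar.IsPrimitive.of_ne_one hθ), ZMod.card]
  have hneg : φ (-3 * l) = φ (-1) * φ (3 * l) := by rw [← map_mul]; ring_nf
  have hp1 : (p : ℂ) - 1 ≠ 0 := sub_ne_zero.mpr (by exact_mod_cast (by omega : p ≠ 1))
  let := Fintype.ofFinite (MulChar (ZMod p) ℂ)
  simp only [finsum_eq_sum_of_fintype]
  rw [sum_sum_gaussSum_prod_eq (Ring.two_ne_zero hF) h3l θ hφ hφ₁, hunits, hcount, hneg]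
  field_simp
  set S := ∑ x, φ (x ^ 3 + 3 * l * (x + 1) ^ 2)
  linear_combination (-φ (-1) * φ (3 * l) * (φ (3 * l) * S - 1)) * hg +
    (p * φ (3 * l) - p * S * φ (3 * l) ^ 2) * hφ_sq (neg_ne_zero.mpr one_ne_zero) -
    p * S * hφ_sq h3l
end
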